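/- arXiv:2507.00564 — 3 statements merged into one kernel-verified Lean document; each statement's English description precedes it below -/
import Mathlib

section
/- Let f : G → H be a covering projection between finite simple graphs with H connected, let S ⊆ V(G) be a vertex cutset, and let A be the vertex set of a connected component of G − S. Then for any two vertices u, v of H, | |f⁻¹(u) ∩ A| − |f⁻¹(v) ∩ A| | ≤ |S|. -/
open SimpleGraph

/-- A covering projection (locally bijective graph homomorphism). -/
def IsCovering {V W : Type*} {G : SimpleGraph V} {H : SimpleGraph W} (f : G →g H) : Prop :=
  ∀ v : V, Set.BijOn f (G.neighborSet v) (H.neighborSet (f v))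

/-! Lifting paths along a covering, once from each vertex of the fibre over the start, gives
vertex-disjoint walks in `G`. If `S` separates `A` from the rest of `G`, the lift from a vertex
of `A` either stays in `A` — and ends in the fibre over the end point — or meets `S`. Sending each
start to such a vertex of its lift is injective by disjointness, so
`|f⁻¹(u) ∩ A| ≤ |f⁻¹(v) ∩ A| + |S|`, and symmetrically. -/

theorem Set.encard_le_encard_of_forall_exists {α β : Type*} {s : Set α} {t : Set β}
    (R : α → β → Prop) (hex : ∀ x ∈ s, ∃ y ∈ t, R x y)
    (huniq : ∀ x ∈ s, ∀ x' ∈ s, ∀ y, R x y → R x' y → x = x') :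
    s.encard ≤ t.encard := by
  obtain rfl | ⟨x₀, hx₀⟩ := s.eq_empty_or_nonempty
  · simp
  have : Nonempty β := ⟨(hex x₀ hx₀).choose⟩
  choose! F hFt hFR using hex
  exact encard_le_encard_of_injOn hFt fun x hx x' hx' h ↦
    huniq x hx x' hx' _ (hFR x hx) (h ▸ hFR x' hx')

theorem Set.abs_ncard_sub_ncard_le {α : Type*} {s t u : Set α} (hu : u.Finite)
    (hst : s.encard ≤ t.encard + u.encard) (hts : t.encard ≤ s.encard + u.encard) :
    |(s.ncard : ℤ) - t.ncard| ≤ u.ncard := by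
  by_cases hs : s.Finite
  · have ht : t.Finite := Set.encard_lt_top_iff.mp <|
      hts.trans_lt (ENat.add_lt_top.mpr ⟨hs.encard_lt_top, hu.encard_lt_top⟩)
    rw [← hs.cast_ncard_eq, ← ht.cast_ncard_eq, ← hu.cast_ncard_eq] at hst hts
    norm_cast at hst hts
    rw [abs_sub_le_iff]
    omega
  · have ht : t.Infinite := fun ht ↦ hs <| Set.encard_lt_top_iff.mp <|
      hst.trans_lt (ENat.add_lt_top.mpr ⟨ht.encard_lt_top, hu.encard_lt_top⟩)
    simp [Set.Infinite.ncard hs, ht.ncard]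

namespace SimpleGraph

variable {V : Type*} {G : SimpleGraph V}

def Separates (G : SimpleGraph V) (S A : Set V) : Prop :=
  ∀ ⦃x y⦄, G.Adj x y → x ∈ A → y ∉ A → y ∈ S

theorem Separates.mem_of_walk {S A : Set V} (hsep : G.Separates S A) {x y : V} (hx : x ∈ A)
    (q : G.Walk x y) (hq : ∀ z ∈ q.support, z ∉ S) : y ∈ A := by
  induction q with
  | nil => exact hx
  | cons h q ih =>
    refine ih ?_ fun z hz ↦ hq z (List.mem_cons_of_mem _ hz)
    by_contra hy
    exact hq _ (List.mem_cons_of_mem _ q.start_mem_support) (hsep h hx hy)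

theorem separates_val_image_supp {s : Set V} (c : (G.induce sᶜ).ConnectedComponent) :
    G.Separates s (Subtype.val '' c.supp) := by
  rintro x y hxy ⟨x', hx', rfl⟩ hy
  by_contra hys
  refine hy ⟨⟨y, hys⟩, ?_, rfl⟩
  rw [ConnectedComponent.mem_supp_iff] at hx' ⊢
  rw [← hx']
  exact ConnectedComponent.connectedComponentMk_eq_of_adj (G := G.induce sᶜ) hxy.symm

end SimpleGraph

namespace IsCovering

variable {V W : Type*} {G : SimpleGraph V} {H : SimpleGraph W} {f : G →g H}

noncomputable def liftAdj (hf : IsCovering f) {x : V} {c : W} (h : H.Adj (f x) c) : V :=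
  ((hf x).surjOn h).choose

theorem adj_liftAdj (hf : IsCovering f) {x : V} {c : W} (h : H.Adj (f x) c) :
    G.Adj x (hf.liftAdj h) :=
  ((hf x).surjOn h).choose_spec.1

theorem map_liftAdj (hf : IsCovering f) {x : V} {c : W} (h : H.Adj (f x) c) :
    f (hf.liftAdj h) = c :=
  ((hf x).surjOn h).choose_spec.2

noncomputable def liftWalk (hf : IsCovering f) :
    ∀ {a b : W}, H.Walk a b → ∀ x : V, f x = a → Σ y : V, G.Walk x y
  | _, _, .nil, x, _ => ⟨x, .nil⟩
  | _, _, .cons h p, _, hx =>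
    let r := liftWalk hf p (hf.liftAdj (hx ▸ h)) (hf.map_liftAdj _)
    ⟨r.1, .cons (hf.adj_liftAdj _) r.2⟩

theorem map_support_liftWalk (hf : IsCovering f) {a b : W} (p : H.Walk a b) (x : V)
    (hx : f x = a) :
    (hf.liftWalk p x hx).2.support.map f = p.support := by
  induction p generalizing x with
  | nil => simp [liftWalk, hx]
  | cons h p ih => simp only [liftWalk, Walk.support_cons, List.map_cons, hx, ih]

theorem map_liftWalk_fst (hf : IsCovering f) {a b : W} (p : H.Walk a b) (x : V)
    (hx : f x = a) :
    f (hf.liftWalk p x hx).1 = b := by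
  induction p generalizing x with
  | nil => exact hx
  | cons h p ih => simp only [liftWalk]; exact ih _ _

theorem eq_of_mem_support_liftWalk (hf : IsCovering f) {a b : W} {p : H.Walk a b}
    (hp : p.support.Nodup) {x x' z : V} {hx : f x = a} {hx' : f x' = a}
    (hz : z ∈ (hf.liftWalk p x hx).2.support) (hz' : z ∈ (hf.liftWalk p x' hx').2.support) :
    x = x' := by
  induction p generalizing x x' with
  | nil =>
    simp only [liftWalk, Walk.support_nil, List.mem_singleton] at hz hz'
    exact hz.symm.trans hz'
  | cons h p ih =>
    rw [Walk.support_cons, List.nodup_cons] at hp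
    have map_mem {y : V} {hy} (hzy : z ∈ (hf.liftWalk p y hy).2.support) : f z ∈ p.support :=
      hf.map_support_liftWalk p y hy ▸ List.mem_map_of_mem hzy
    simp only [liftWalk, Walk.support_cons, List.mem_cons] at hz hz'
    rcases hz with rfl | hz <;> rcases hz' with rfl | hz'
    · rfl
    · exact absurd (hx ▸ map_mem hz') hp.1
    · exact absurd (hx' ▸ map_mem hz) hp.1
    · have hnext := ih hp.2 hz hz'
      have hadj : G.Adj (hf.liftAdj (hx ▸ h)) x := (hf.adj_liftAdj _).symm
      have hadj' : G.Adj (hf.liftAdj (hx ▸ h)) x' := hnext ▸ (hf.adj_liftAdj _).symm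
      exact (hf _).injOn hadj hadj' (hx.trans hx'.symm)

theorem encard_fiber_inter_le (hf : IsCovering f) {S A : Set V} (hsep : G.Separates S A)
    {a b : W} (hab : H.Reachable a b) :
    (f ⁻¹' {a} ∩ A).encard ≤ (f ⁻¹' {b} ∩ A).encard + S.encard := by
  classical
  obtain ⟨p⟩ := hab
  have hex : ∀ x ∈ f ⁻¹' {a} ∩ A, ∃ z ∈ (f ⁻¹' {b} ∩ A) ∪ S,
      ∃ hx : f x = a, z ∈ (hf.liftWalk p.toPath.1 x hx).2.support := by
    rintro x ⟨hx, hxA⟩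
    by_cases hS : ∃ z ∈ (hf.liftWalk p.toPath.1 x hx).2.support, z ∈ S
    · obtain ⟨z, hz, hzS⟩ := hS
      exact ⟨z, .inr hzS, hx, hz⟩
    · push Not at hS
      exact ⟨_, .inl ⟨hf.map_liftWalk_fst _ x hx, hsep.mem_of_walk hxA _ hS⟩, hx,
        Walk.end_mem_support _⟩
  calc (f ⁻¹' {a} ∩ A).encard ≤ ((f ⁻¹' {b} ∩ A) ∪ S).encard :=
        Set.encard_le_encard_of_forall_exists _ hex fun _ _ _ _ _ ⟨_, hz⟩ ⟨_, hz'⟩ ↦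
          hf.eq_of_mem_support_liftWalk p.toPath.2.support_nodup hz hz'
    _ ≤ (f ⁻¹' {b} ∩ A).encard + S.encard := Set.encard_union_le _ _

end IsCovering

theorem cutset_fiber_bound_general {V W : Type*}
    {G : SimpleGraph V} {H : SimpleGraph W}
    (f : G →g H) (hf : IsCovering f) (hH : H.Connected)
    (S : Finset V)
    (A : Set V)
    (hA : ∃ c : (G.induce ((↑S : Set V)ᶜ)).ConnectedComponent,
      A = Subtype.val '' c.supp)
    (u v : W) :
    |((f ⁻¹' {u} ∩ A).ncard : ℤ) - ((f ⁻¹' {v} ∩ A).ncard : ℤ)| ≤ S.card := by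
  obtain ⟨c, rfl⟩ := hA
  have hsep := separates_val_image_supp c
  rw [← Set.ncard_coe_finset]
  exact Set.abs_ncard_sub_ncard_le S.finite_toSet
    (hf.encard_fiber_inter_le hsep (hH.preconnected u v))
    (hf.encard_fiber_inter_le hsep (hH.preconnected v u))

theorem cutset_fiber_bound {V W : Type*} [Fintype V] [Fintype W]
    {G : SimpleGraph V} {H : SimpleGraph W}
    (f : G →g H) (hf : IsCovering f) (hH : H.Connected)
    (S : Finset V) (hS : ¬ (G.induce ((↑S : Set V)ᶜ)).Connected)
    (A : Set V)
    (hA : ∃ c : (G.induce ((↑S : Set V)ᶜ)).ConnectedComponent,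
      A = Subtype.val '' c.supp)
    (u v : W) :
    |((f ⁻¹' {u} ∩ A).ncard : ℤ) - ((f ⁻¹' {v} ∩ A).ncard : ℤ)| ≤ S.card :=
  cutset_fiber_bound_general f hf hH S A hA u v
end

section
/- Every finite k-regular bipartite simple multigraph is k-edge-colorable; that is, its edge set is a union of k perfect matchings. -/
/-!
Double counting the edges between a vertex set `s` and its neighbourhood `N(s)` in a `k`-regular
graph gives `k |s| ≤ k |N(s)|`, so for `k > 0` Hall's condition holds and a regular bipartite
graph has a perfect matching. Deleting it leaves a `(k - 1)`-regular bipartite graph, and the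
theorem follows by induction on `k`.
-/

open SimpleGraph Function

namespace SimpleGraph

variable {V : Type*} {G G' : SimpleGraph V} {k : ℕ}

def IsOneFactorization {ι : Type*} (G : SimpleGraph V) (M : ι → G.Subgraph) : Prop :=
  (∀ i, (M i).IsPerfectMatching) ∧ Pairwise (Disjoint on fun i ↦ (M i).edgeSet) ∧
    ⋃ i, (M i).edgeSet = G.edgeSet

lemma Subgraph.IsPerfectMatching.map_ofLE {M : G'.Subgraph} (hM : M.IsPerfectMatching)
    (h : G' ≤ G) : (M.map (Hom.ofLE h)).IsPerfectMatching :=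
  ⟨hM.1.map_ofLE h, by simp [Subgraph.IsSpanning, hM.2.verts_eq_univ]⟩

lemma isOneFactorization_of_isEmpty {ι : Type*} [IsEmpty ι] (M : ι → G.Subgraph)
    (hG : G = ⊥) : G.IsOneFactorization M := by
  subst hG
  exact ⟨isEmptyElim, fun i ↦ isEmptyElim i, by simp⟩

lemma IsOneFactorization.cons {n : ℕ} {M₀ : G.Subgraph} (hM₀ : M₀.IsPerfectMatching)
    {M : Fin n → (G.deleteEdges M₀.edgeSet).Subgraph}
    (hM : (G.deleteEdges M₀.edgeSet).IsOneFactorization M) :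
    G.IsOneFactorization (Fin.cons M₀ fun i ↦ (M i).map (Hom.ofLE (deleteEdges_le _))) := by
  obtain ⟨hpm, hdisj, hunion⟩ := hM
  have hdisj₀ (i : Fin n) : Disjoint M₀.edgeSet (M i).edgeSet := by
    have := (M i).edgeSet_subset
    rw [edgeSet_deleteEdges] at this
    exact Set.disjoint_sdiff_right.mono_right this
  have hcons : (fun i ↦ (Fin.cons (α := fun _ ↦ G.Subgraph) M₀
      (fun i ↦ (M i).map (Hom.ofLE (deleteEdges_le _))) i).edgeSet) =
      Fin.cons M₀.edgeSet fun i ↦ (M i).edgeSet := by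
    ext i : 1
    cases i using Fin.cases <;> simp
  refine ⟨Fin.cons hM₀ fun i ↦ (hpm i).map_ofLE _, ?_, ?_⟩
  · rw [hcons, pairwise_fin_succ_iff]
    exact ⟨fun i ↦ (hdisj₀ i).symm, hdisj₀, fun i j hij ↦ hdisj hij⟩
  · rw [hcons, Set.iUnion_cons, hunion, edgeSet_deleteEdges,
      Set.union_sdiff_cancel M₀.edgeSet_subset]

theorem eq_bot_of_ncard_neighborSet_eq_zero [Finite V] (h : ∀ v, (G.neighborSet v).ncard = 0) :
    G = ⊥ := by
  ext v w
  simpa using fun hvw ↦ ((Set.ncard_eq_zero).mp (h v)).subset hvw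

theorem ncard_neighborSet_deleteEdges_add_one [Finite V] {M : G.Subgraph}
    (hM : M.IsPerfectMatching) (v : V) :
    ((G.deleteEdges M.edgeSet).neighborSet v).ncard + 1 = (G.neighborSet v).ncard := by
  obtain ⟨w, hvw, hw⟩ := hM.1 (hM.2 v)
  have : (G.deleteEdges M.edgeSet).neighborSet v = G.neighborSet v \ {w} := by
    ext u
    simp only [mem_neighborSet, deleteEdges_adj, Subgraph.mem_edgeSet, Set.mem_sdiff,
      Set.mem_singleton_iff]
    exact and_congr_right fun _ ↦ ⟨fun h hu ↦ h (hu ▸ hvw), fun h hu ↦ h (hw u hu)⟩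
  rw [this, Set.ncard_sdiff_singleton_add_one (show w ∈ G.neighborSet v from M.adj_sub hvw)]

theorem ncard_le_ncard_iUnion_neighborSet_of_regular [Finite V] (hk : 0 < k)
    (hreg : ∀ v, (G.neighborSet v).ncard = k) (s : Set V) :
    s.ncard ≤ (⋃ x ∈ s, G.neighborSet x).ncard := by
  classical
  have := Fintype.ofFinite V
  set t := ⋃ x ∈ s, G.neighborSet x
  have hs : ∀ a ∈ s.toFinset, k ≤ (t.toFinset.bipartiteAbove G.Adj a).card := by
    intro a ha
    rw [← hreg a, ← Set.ncard_coe_finset]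
    refine Set.ncard_le_ncard (fun b hb ↦ ?_)
    simp only [Finset.coe_bipartiteAbove]
    exact ⟨Set.mem_toFinset.mpr (Set.mem_biUnion (Set.mem_toFinset.mp ha) hb), hb⟩
  have ht : ∀ b ∈ t.toFinset, (s.toFinset.bipartiteBelow G.Adj b).card ≤ k := by
    intro b _
    rw [← hreg b, ← Set.ncard_coe_finset]
    refine Set.ncard_le_ncard (fun a ha ↦ ?_)
    simp only [Finset.coe_bipartiteBelow] at ha
    exact ha.2.symm
  rw [Set.ncard_eq_toFinset_card', Set.ncard_eq_toFinset_card']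
  exact Nat.le_of_mul_le_mul_right (Finset.card_mul_le_card_mul G.Adj hs ht) hk

theorem IsBipartite.exists_isPerfectMatching_of_regular [Finite V] (hG : G.IsBipartite)
    (hk : 0 < k) (hreg : ∀ v, (G.neighborSet v).ncard = k) :
    ∃ M : G.Subgraph, M.IsPerfectMatching := by
  classical
  have := Fintype.ofFinite V
  obtain ⟨s, t, hst⟩ := hG.exists_isBipartiteWith
  exact exists_isPerfectMatching_of_forall_ncard_le hst
    (ncard_le_ncard_iUnion_neighborSet_of_regular hk hreg)

theorem IsBipartite.exists_isOneFactorization_of_regular [Finite V] (hG : G.IsBipartite)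
    (hreg : ∀ v, (G.neighborSet v).ncard = k) :
    ∃ M : Fin k → G.Subgraph, G.IsOneFactorization M := by
  induction k generalizing G with
  | zero =>
    exact ⟨Fin.elim0,
      isOneFactorization_of_isEmpty _ (eq_bot_of_ncard_neighborSet_eq_zero hreg)⟩
  | succ k ih =>
    obtain ⟨M₀, hM₀⟩ := hG.exists_isPerfectMatching_of_regular k.succ_pos hreg
    obtain ⟨M, hM⟩ := ih (hG.mono_left (deleteEdges_le M₀.edgeSet)) fun v ↦ by
      have := ncard_neighborSet_deleteEdges_add_one hM₀ v
      have := hreg v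
      omega
    exact ⟨_, hM.cons hM₀⟩

end SimpleGraph

theorem regular_bipartite_edge_coloring {V : Type*} [Fintype V]
    (G : SimpleGraph V) (hbip : G.Colorable 2) (k : ℕ)
    (hreg : ∀ v, (G.neighborSet v).ncard = k) :
    ∃ M : Fin k → G.Subgraph,
      (∀ i, (M i).IsPerfectMatching) ∧
      (∀ i j, i ≠ j → Disjoint (M i).edgeSet (M j).edgeSet) ∧
      (⋃ i, (M i).edgeSet) = G.edgeSet := by
  obtain ⟨M, hpm, hdisj, hunion⟩ := IsBipartite.exists_isOneFactorization_of_regular hbip hreg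
  exact ⟨M, hpm, fun _ _ hij ↦ hdisj hij, hunion⟩
end

section
/- Let H be a finite simple graph and let H × K2 denote the bipartite double cover of H. If G covers H × K2 then G is bipartite and G covers H. Conversely, if G is bipartite and covers H, then G covers H × K2, provided H is not bipartite. -/
open SimpleGraph

/-- The bipartite double cover $H × K_2$. -/
def doubleCover {W : Type*} (H : SimpleGraph W) : SimpleGraph (W × Bool) where
  Adj x y := H.Adj x.1 y.1 ∧ y.2 = !x.2
  symm := by
    constructor
    rintro ⟨u, i⟩ ⟨v, j⟩ ⟨h, hj⟩
    exact ⟨h.symm, by subst hj; simp⟩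
  loopless := by constructor; rintro ⟨u, i⟩ ⟨h, _⟩; exact H.irrefl h

/-- `G` covers `H`. -/
def Covers {V W : Type*} (G : SimpleGraph V) (H : SimpleGraph W) : Prop :=
  ∃ f : G →g H, IsCovering f

section

variable {U V W : Type*} {F : SimpleGraph U} {G : SimpleGraph V} {H : SimpleGraph W}

theorem IsCovering.comp {g : G →g H} {f : F →g G} (hg : IsCovering g) (hf : IsCovering f) :
    IsCovering (g.comp f) :=
  fun v => (hg (f v)).comp (hf v)

theorem Covers.trans (hFG : Covers F G) (hGH : Covers G H) : Covers F H := by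
  obtain ⟨f, hf⟩ := hFG
  obtain ⟨g, hg⟩ := hGH
  exact ⟨g.comp f, hg.comp hf⟩

theorem SimpleGraph.Coloring.eq_not_of_adj (c : G.Coloring Bool) {u v : V}
    (h : G.Adj u v) : c v = !c u :=
  Bool.eq_not.mpr (c.valid h).symm

namespace doubleCover

variable (H) in
def fst : doubleCover H →g H where
  toFun := Prod.fst
  map_rel' h := h.1

theorem isCovering_fst : IsCovering (fst H) := by
  rintro ⟨u, i⟩
  refine ⟨fun x hx => hx.1, ?_, fun w hw => ⟨(w, !i), ⟨hw, rfl⟩, rfl⟩⟩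
  rintro ⟨w, j⟩ ⟨-, rfl⟩ ⟨w', j'⟩ ⟨-, rfl⟩ (rfl : w = w')
  rfl

variable (H) in
theorem covers_self : Covers (doubleCover H) H :=
  ⟨fst H, isCovering_fst⟩

variable (H) in
def sndColoring : (doubleCover H).Coloring Bool :=
  Coloring.mk Prod.snd fun h => by rw [h.2]; exact (Bool.not_ne_self _).symm

variable (H) in
theorem colorable_two : (doubleCover H).Colorable 2 :=
  (sndColoring H).colorable

def lift (f : G →g H) (c : G.Coloring Bool) : G →g doubleCover H where
  toFun v := (f v, c v)
  map_rel' h := ⟨f.map_adj h, c.eq_not_of_adj h⟩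

theorem isCovering_lift {f : G →g H} (hf : IsCovering f) (c : G.Coloring Bool) :
    IsCovering (lift f c) := by
  intro v
  refine ⟨fun u hu => (lift f c).map_adj hu, ?_, ?_⟩
  · exact fun u hu u' hu' h => (hf v).injOn hu hu' (congrArg Prod.fst h)
  · rintro ⟨w, j⟩ ⟨hw, rfl⟩
    obtain ⟨u, hu, rfl⟩ := (hf v).surjOn hw
    exact ⟨u, hu, Prod.ext rfl (c.eq_not_of_adj hu)⟩

end doubleCover

end

theorem double_cover_characterization_general {V W : Type*}
    (G : SimpleGraph V) (H : SimpleGraph W) :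
    (Covers G (doubleCover H) → G.Colorable 2 ∧ Covers G H) ∧
    (¬ H.Colorable 2 → G.Colorable 2 → Covers G H → Covers G (doubleCover H)) := by
  refine ⟨fun hG => ⟨?_, hG.trans (doubleCover.covers_self H)⟩, ?_⟩
  · obtain ⟨f, -⟩ := hG
    exact (doubleCover.colorable_two H).of_hom f
  · rintro - ⟨c⟩ ⟨f, hf⟩
    exact ⟨_, doubleCover.isCovering_lift hf (G.recolorOfEquiv finTwoEquiv c)⟩

theorem double_cover_characterization {V W : Type*} [Fintype V] [Fintype W]
    (G : SimpleGraph V) (H : SimpleGraph W) :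
    (Covers G (doubleCover H) → G.Colorable 2 ∧ Covers G H) ∧
    (¬ H.Colorable 2 → G.Colorable 2 → Covers G H → Covers G (doubleCover H)) :=
  double_cover_characterization_general G H
end
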